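/- arXiv:1501.01242 — 4 statements merged into one kernel-verified Lean document; each statement's English description precedes it below -/
import Mathlib

section
/- Let K be a real symmetric positive semidefinite n×n matrix, let γ ≥ 0, and suppose λ_min(K) ≥ 3γ. Then K − γG is positive semidefinite, where G = G(a,b,c) is the canonical gradient matrix of a triplet of distinct indices. (Hence no projection onto the PSD cone is needed after such a stochastic gradient step.) -/
/-- The canonical gradient matrix `G(a,b,c)` of a triplet of indices. -/
def canonG {n : ℕ} (a b c : Fin n) : Matrix (Fin n) (Fin n) ℝ :=
  fun i j =>
    if (i = a ∧ j = b) ∨ (i = b ∧ j = a) then -2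
    else if (i = a ∧ j = c) ∨ (i = c ∧ j = a) then 2
    else if i = b ∧ j = b then 1
    else if i = c ∧ j = c then -1
    else 0

/-!
In the Loewner order, `K ≥ λ_min(K) • 1 ≥ 3γ • 1`. On the other hand the quadratic form of `G`
is bounded by `3‖x‖²`, because
`3 (x_a² + x_b² + x_c²) - xᵀ G x = 2 (x_a + x_b)² + (x_a - 2 x_c)²`.
Hence `γ • G ≤ 3γ • 1 ≤ K`.
-/

open Matrix
open scoped MatrixOrder

theorem Matrix.IsHermitian.algebraMap_le_iff_le_eigenvalues {𝕜 n : Type*} [RCLike 𝕜]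
    [Fintype n] [DecidableEq n] {A : Matrix n n 𝕜} (hA : A.IsHermitian) {r : ℝ} :
    algebraMap ℝ (Matrix n n 𝕜) r ≤ A ↔ ∀ i, r ≤ hA.eigenvalues i := by
  rw [algebraMap_le_iff_le_spectrum hA.isSelfAdjoint, hA.spectrum_real_eq_range_eigenvalues]
  simp

theorem Matrix.dotProduct_single_one_mulVec {n α : Type*} [Fintype n] [DecidableEq n]
    [NonAssocSemiring α] (x : n → α) (i j : n) :
    x ⬝ᵥ (single i j 1 *ᵥ x) = x i * x j := by
  rw [single_mulVec, one_mul, ← Pi.single, dotProduct_single]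

theorem Matrix.sum_sq_le_dotProduct_self {n : Type*} [Fintype n] (x : n → ℝ) (s : Finset n) :
    ∑ i ∈ s, x i ^ 2 ≤ x ⬝ᵥ x := by
  simpa only [dotProduct, sq] using Finset.sum_le_univ_sum_of_nonneg fun i => sq_nonneg (x i)

section canonG

variable {n : ℕ} {a b c : Fin n}

theorem isHermitian_canonG (a b c : Fin n) : (canonG a b c).IsHermitian := by
  ext i j
  simp only [conjTranspose_apply, star_trivial, canonG]
  grind

theorem canonG_eq_sum_single (hab : a ≠ b) (hac : a ≠ c) (hbc : b ≠ c) :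
    canonG a b c = (-2 : ℝ) • (single a b 1 + single b a 1)
      + (2 : ℝ) • (single a c 1 + single c a 1) + single b b 1 - single c c 1 := by
  ext i j
  simp only [canonG, Matrix.add_apply, Matrix.sub_apply, Matrix.smul_apply, single_apply,
    smul_eq_mul]
  grind

theorem dotProduct_canonG_mulVec (hab : a ≠ b) (hac : a ≠ c) (hbc : b ≠ c) (x : Fin n → ℝ) :
    x ⬝ᵥ (canonG a b c *ᵥ x) = -4 * (x a * x b) + 4 * (x a * x c) + x b ^ 2 - x c ^ 2 := by
  simp only [canonG_eq_sum_single hab hac hbc, sub_mulVec, add_mulVec, smul_mulVec,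
    dotProduct_add, dotProduct_sub, dotProduct_smul, dotProduct_single_one_mulVec, smul_eq_mul]
  ring

theorem canonG_le_three (hab : a ≠ b) (hac : a ≠ c) (hbc : b ≠ c) :
    canonG a b c ≤ algebraMap ℝ _ 3 := by
  rw [le_iff, Algebra.algebraMap_eq_smul_one]
  refine PosSemidef.of_dotProduct_mulVec_nonneg
    ((isHermitian_one.smul (.all 3)).sub (isHermitian_canonG a b c)) fun x => ?_
  have habc := sum_sq_le_dotProduct_self x {a, b, c}
  rw [Finset.sum_insert (by simp [hab, hac]), Finset.sum_pair hbc] at habc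
  simp only [star_trivial, sub_mulVec, smul_mulVec, one_mulVec, dotProduct_sub, dotProduct_smul,
    smul_eq_mul, dotProduct_canonG_mulVec hab hac hbc]
  nlinarith [sq_nonneg (x a + x b), sq_nonneg (x a - 2 * x c)]

end canonG

theorem posSemidef_sub_smul_canonG_general {n : ℕ} (a b c : Fin n)
    (hab : a ≠ b) (hac : a ≠ c) (hbc : b ≠ c)
    (K : Matrix (Fin n) (Fin n) ℝ) (hK : K.PosSemidef) (γ : ℝ) (hγ : 0 ≤ γ)
    (hmin : 3 * γ ≤ ⨅ j : Fin n, hK.1.eigenvalues j) :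
    (K - γ • canonG a b c).PosSemidef := by
  rw [← nonneg_iff_posSemidef, sub_nonneg]
  calc γ • canonG a b c ≤ γ • algebraMap ℝ _ 3 :=
        smul_le_smul_of_nonneg_left (canonG_le_three hab hac hbc) hγ
    _ = algebraMap ℝ _ (3 * γ) := by rw [mul_comm, map_mul, Algebra.smul_def]
    _ ≤ K := hK.1.algebraMap_le_iff_le_eigenvalues.2 fun j =>
        hmin.trans (ciInf_le (Finite.bddBelow_range _) j)

/-- If `K` is PSD and `λ_min(K) ≥ 3γ` with `γ ≥ 0`, then `K - γ • G(a,b,c)` is PSD. -/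
theorem posSemidef_sub_smul_canonG {n : ℕ} (hn : 3 ≤ n) (a b c : Fin n)
    (hab : a ≠ b) (hac : a ≠ c) (hbc : b ≠ c)
    (K : Matrix (Fin n) (Fin n) ℝ) (hK : K.PosSemidef) (γ : ℝ) (hγ : 0 ≤ γ)
    (hmin : 3 * γ ≤ ⨅ j : Fin n, hK.1.eigenvalues j) :
    (K - γ • canonG a b c).PosSemidef :=
  posSemidef_sub_smul_canonG_general a b c hab hac hbc K hK γ hγ hmin
end

section
/- Let M be a real symmetric n×n matrix whose eigenvalues in nondecreasing order λ_1 ≤ λ_2 ≤ … ≤ λ_n satisfy λ_2 ≥ 0, and suppose λ_1 < 0 with a unit eigenvector v. Then M − λ_1 v vᵀ is the Frobenius-nearest positive semidefinite matrix to M: for every positive semidefinite n×n matrix P, ‖M − P‖_F ≥ |λ_1| = ‖M − (M − λ_1 v vᵀ)‖_F. -/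
/-!
For PSD `P`, the quadratic form of `M - P` at the unit eigenvector `v` is `λ - vᵀ P v ≤ λ < 0`,
while Cauchy–Schwarz in `ℝ^{n×n}` bounds its absolute value by `‖M - P‖_F ‖v vᵀ‖_F = ‖M - P‖_F`.
-/

/-- The Frobenius norm of a real matrix. -/
noncomputable def frobNorm {n : ℕ} (A : Matrix (Fin n) (Fin n) ℝ) : ℝ :=
  Real.sqrt (∑ i, ∑ j, (A i j) ^ 2)

open Matrix

section QuadraticForm

variable {m n : Type*} [Fintype m] [Fintype n]

lemma sum_sum_sq_mul_sq (u : m → ℝ) (w : n → ℝ) :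
    ∑ i, ∑ j, (u i * w j) ^ 2 = (∑ i, u i ^ 2) * ∑ j, w j ^ 2 := by
  simp only [mul_pow, Finset.sum_mul_sum]

lemma dotProduct_mulVec_eq_sum_sum (A : Matrix m n ℝ) (u : m → ℝ) (w : n → ℝ) :
    u ⬝ᵥ A *ᵥ w = ∑ i, ∑ j, A i j * (u i * w j) := by
  simp only [dotProduct, mulVec, Finset.mul_sum]
  exact Finset.sum_congr rfl fun i _ => Finset.sum_congr rfl fun j _ => by ring

lemma sq_dotProduct_mulVec_le (A : Matrix m n ℝ) (u : m → ℝ) (w : n → ℝ) :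
    (u ⬝ᵥ A *ᵥ w) ^ 2 ≤ (∑ i, ∑ j, A i j ^ 2) * ((∑ i, u i ^ 2) * ∑ j, w j ^ 2) := by
  have hCS := Finset.sum_mul_sq_le_sq_mul_sq Finset.univ
    (fun p : m × n => A p.1 p.2) (fun p => u p.1 * w p.2)
  simp only [Fintype.sum_prod_type] at hCS
  rwa [dotProduct_mulVec_eq_sum_sum, ← sum_sum_sq_mul_sq]

end QuadraticForm

section FrobNorm

variable {n : ℕ}

lemma abs_dotProduct_mulVec_le_frobNorm (A : Matrix (Fin n) (Fin n) ℝ) (v : Fin n → ℝ) :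
    |v ⬝ᵥ A *ᵥ v| ≤ frobNorm A * ∑ i, v i ^ 2 := by
  have hv : 0 ≤ ∑ i, v i ^ 2 := Finset.sum_nonneg fun i _ => sq_nonneg (v i)
  calc |v ⬝ᵥ A *ᵥ v|
      ≤ √((∑ i, ∑ j, A i j ^ 2) * ((∑ i, v i ^ 2) * ∑ i, v i ^ 2)) :=
        Real.abs_le_sqrt (sq_dotProduct_mulVec_le A v v)
    _ = frobNorm A * ∑ i, v i ^ 2 := by
        rw [Real.sqrt_mul' _ (mul_nonneg hv hv), Real.sqrt_mul_self hv, frobNorm]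

lemma frobNorm_smul_vecMulVec_self (c : ℝ) (v : Fin n → ℝ) :
    frobNorm (c • vecMulVec v v) = |c| * ∑ i, v i ^ 2 := by
  have hv : 0 ≤ ∑ i, v i ^ 2 := Finset.sum_nonneg fun i _ => sq_nonneg (v i)
  have hsum : ∑ i, ∑ j, (c • vecMulVec v v) i j ^ 2 = (|c| * ∑ i, v i ^ 2) ^ 2 := by
    simp only [Matrix.smul_apply, vecMulVec_apply, smul_eq_mul, mul_pow, ← Finset.mul_sum,
      ← Finset.sum_mul, sq_abs]
    ring
  rw [frobNorm, hsum, Real.sqrt_sq (mul_nonneg (abs_nonneg c) hv)]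

end FrobNorm

theorem frobenius_nearest_psd_general {n : ℕ}
    (M : Matrix (Fin n) (Fin n) ℝ)
    (lam : ℝ) (hlam : lam < 0) (v : Fin n → ℝ)
    (hv : M.mulVec v = lam • v) (hunit : ∑ i, v i ^ 2 = 1) :
    frobNorm (M - (M - lam • Matrix.vecMulVec v v)) = |lam| ∧
      ∀ P : Matrix (Fin n) (Fin n) ℝ, P.PosSemidef → |lam| ≤ frobNorm (M - P) := by
  refine ⟨by rw [sub_sub_cancel, frobNorm_smul_vecMulVec_self, hunit, mul_one], fun P hP => ?_⟩
  have hvv : v ⬝ᵥ v = 1 := by simpa only [dotProduct, sq] using hunit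
  have hrayleigh : v ⬝ᵥ (M - P) *ᵥ v ≤ lam := by
    rw [sub_mulVec, dotProduct_sub, hv, dotProduct_smul, hvv, smul_eq_mul, mul_one]
    have hPv : 0 ≤ v ⬝ᵥ P *ᵥ v := by
      simpa only [star_trivial] using hP.dotProduct_mulVec_nonneg v
    linarith
  calc |lam| = -lam := abs_of_neg hlam
    _ ≤ -(v ⬝ᵥ (M - P) *ᵥ v) := neg_le_neg hrayleigh
    _ ≤ |v ⬝ᵥ (M - P) *ᵥ v| := neg_le_abs _
    _ ≤ frobNorm (M - P) * ∑ i, v i ^ 2 := abs_dotProduct_mulVec_le_frobNorm _ _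
    _ = frobNorm (M - P) := by rw [hunit, mul_one]

/-- If `M` is a real symmetric matrix with at most one negative eigenvalue and
`lam < 0` is an eigenvalue with unit eigenvector `v`, then `M - lam • v vᵀ` is the
Frobenius-nearest PSD matrix to `M`: its Frobenius distance to `M` is `|lam|`, and
every PSD matrix `P` satisfies `‖M - P‖_F ≥ |lam|`. -/
theorem frobenius_nearest_psd {n : ℕ}
    (M : Matrix (Fin n) (Fin n) ℝ) (hM : M.IsHermitian)
    (hone : (Finset.univ.filter fun i : Fin n => hM.eigenvalues i < 0).card ≤ 1)
    (lam : ℝ) (hlam : lam < 0) (v : Fin n → ℝ)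
    (hv : M.mulVec v = lam • v) (hunit : ∑ i, v i ^ 2 = 1) :
    frobNorm (M - (M - lam • Matrix.vecMulVec v v)) = |lam| ∧
      ∀ P : Matrix (Fin n) (Fin n) ℝ, P.PosSemidef → |lam| ≤ frobNorm (M - P) :=
  frobenius_nearest_psd_general M lam hlam v hv hunit
end

section
/- (GNMDS passive-aggressive step size.) Let K be a real n×n matrix and (a,b,c) a triplet of distinct indices with canonical gradient matrix G, and suppose the unit-margin constraint is violated at K, i.e., d²_K(a,b) − d²_K(a,c) + 1 > 0. Set δ* = (d²_K(a,b) − d²_K(a,c) + 1)/10. Then δ* > 0, the matrix K − δ*G satisfies the margin constraint with equality (d²_{K−δ*G}(a,b) + 1 = d²_{K−δ*G}(a,c)), and every δ ≥ 0 such that d²_{K−δG}(a,b) + 1 ≤ d²_{K−δG}(a,c) satisfies δ ≥ δ*; i.e., δ* is the unique minimizer of δ² over the feasible set. -/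
/-- The kernel squared distance `d²_K(a,b) = K_aa + K_bb - 2 K_ab`. -/
def d2 {n : ℕ} (K : Matrix (Fin n) (Fin n) ℝ) (a b : Fin n) : ℝ :=
  K a a + K b b - 2 * K a b

lemma d2_step {n : ℕ} (a b c : Fin n)
    (hab : a ≠ b) (hac : a ≠ c) (hbc : b ≠ c)
    (K : Matrix (Fin n) (Fin n) ℝ) (δ : ℝ) :
    d2 (K - δ • canonG a b c) a b = d2 K a b - 5 * δ ∧
    d2 (K - δ • canonG a b c) a c = d2 K a c + 5 * δ := by
  simp only [d2, canonG, Matrix.sub_apply, Matrix.smul_apply, smul_eq_mul]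
  have hba := hab.symm
  have hca := hac.symm
  have hcb := hbc.symm
  constructor <;> · simp [hab, hac, hbc, hba, hca, hcb]; ring

/-- GNMDS passive-aggressive step size: if the unit-margin constraint is violated at
`K`, then `δ* = (d²_K(a,b) - d²_K(a,c) + 1)/10` is positive, makes the margin
constraint hold with equality after the step `K - δ*G`, and is the smallest
nonnegative step size satisfying the margin constraint (hence the unique minimizer
of `δ²` over the feasible set). -/
theorem gnmds_passive_aggressive_step {n : ℕ} (hn : 3 ≤ n) (a b c : Fin n)
    (hab : a ≠ b) (hac : a ≠ c) (hbc : b ≠ c)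
    (K : Matrix (Fin n) (Fin n) ℝ)
    (hviol : d2 K a b - d2 K a c + 1 > 0)
    (δstar : ℝ) (hδstar : δstar = (d2 K a b - d2 K a c + 1) / 10) :
    0 < δstar ∧
    d2 (K - δstar • canonG a b c) a b + 1 = d2 (K - δstar • canonG a b c) a c ∧
    ∀ δ : ℝ, 0 ≤ δ →
      d2 (K - δ • canonG a b c) a b + 1 ≤ d2 (K - δ • canonG a b c) a c →
      δstar ≤ δ := by
  obtain ⟨h1, h2⟩ := d2_step a b c hab hac hbc K δstar
  refine ⟨by rw [hδstar]; linarith, by rw [h1, h2]; rw [hδstar]; ring, ?_⟩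
  intro δ hδ hcon
  obtain ⟨h1', h2'⟩ := d2_step a b c hab hac hbc K δ
  rw [h1', h2'] at hcon
  rw [hδstar]; linarith
end

section
/- (STE passive-aggressive step size.) Let K be a real n×n matrix, t = (a,b,c) a triplet of distinct indices with canonical gradient matrix G, and P ∈ (1/2, 1) with κ = log P − log(1 − P) > 0. Suppose p_t^K < P. Set δ* = (d²_K(a,b) − d²_K(a,c) + κ)/10. Then δ* > 0, p_t^{K−δ*G} = P, and every δ ≥ 0 with p_t^{K−δG} ≥ P satisfies δ ≥ δ*; i.e., δ* is the unique minimizer of δ² subject to δ ≥ 0 and p_t^{K−δG} ≥ P. -/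
/-- The STE satisfaction probability of the triplet `(a,b,c)` under kernel `K`. -/
noncomputable def pSTE {n : ℕ} (K : Matrix (Fin n) (Fin n) ℝ) (a b c : Fin n) : ℝ :=
  Real.exp (-(d2 K a b)) / (Real.exp (-(d2 K a b)) + Real.exp (-(d2 K a c)))

/-!
The satisfaction probability is the sigmoid of the margin `d²_K(a,c) - d²_K(a,b)`, and a step
`K ↦ K - δ G` raises that margin by exactly `10 δ`. Since the sigmoid is strictly increasing and
`κ` is the logit of `P`, the constraint `p_t^{K-δG} ≥ P` is the linear constraint
`d²_K(a,c) - d²_K(a,b) + 10 δ ≥ κ`, whose smallest solution is `δ*`.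
-/

open Real

lemma sigmoid_log_sub_log_one_sub {p : ℝ} (hp0 : 0 < p) (hp1 : p < 1) :
    sigmoid (log p - log (1 - p)) = p := by
  have h1p : 0 < 1 - p := sub_pos.2 hp1
  rw [sigmoid_def, neg_sub, exp_sub, exp_log h1p, exp_log hp0]
  field_simp
  ring

section Triplet

variable {n : ℕ}

lemma pSTE_eq_sigmoid (K : Matrix (Fin n) (Fin n) ℝ) (a b c : Fin n) :
    pSTE K a b c = sigmoid (d2 K a c - d2 K a b) := by
  have hsplit : exp (-d2 K a c) = exp (-d2 K a b) * exp (-(d2 K a c - d2 K a b)) := by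
    rw [← exp_add]; ring_nf
  rw [pSTE, sigmoid_def, hsplit, ← mul_one_add, div_mul_cancel_left₀ (exp_pos _).ne']

lemma d2_sub_smul (K G : Matrix (Fin n) (Fin n) ℝ) (δ : ℝ) (a b : Fin n) :
    d2 (K - δ • G) a b = d2 K a b - δ * d2 G a b := by
  simp only [d2, Matrix.sub_apply, Matrix.smul_apply, smul_eq_mul]
  ring

variable {a b c : Fin n}

lemma d2_canonG_left (hab : a ≠ b) (hac : a ≠ c) (hbc : b ≠ c) :
    d2 (canonG a b c) a b = 5 := by
  norm_num [d2, canonG, hab, hac, hab.symm, hbc]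

lemma d2_canonG_right (hab : a ≠ b) (hac : a ≠ c) (hbc : b ≠ c) :
    d2 (canonG a b c) a c = -5 := by
  norm_num [d2, canonG, hab, hac, hac.symm, hbc.symm]

lemma pSTE_sub_smul_canonG (hab : a ≠ b) (hac : a ≠ c) (hbc : b ≠ c)
    (K : Matrix (Fin n) (Fin n) ℝ) (δ : ℝ) :
    pSTE (K - δ • canonG a b c) a b c = sigmoid (d2 K a c - d2 K a b + 10 * δ) := by
  rw [pSTE_eq_sigmoid, d2_sub_smul, d2_sub_smul, d2_canonG_left hab hac hbc,
    d2_canonG_right hab hac hbc]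
  ring_nf

end Triplet

theorem ste_passive_aggressive_step_general {n : ℕ} (a b c : Fin n)
    (hab : a ≠ b) (hac : a ≠ c) (hbc : b ≠ c)
    (K : Matrix (Fin n) (Fin n) ℝ)
    (P : ℝ) (hP0 : 1 / 2 < P) (hP1 : P < 1)
    (κ : ℝ) (hκ : κ = Real.log P - Real.log (1 - P))
    (hviol : pSTE K a b c < P)
    (δstar : ℝ) (hδstar : δstar = (d2 K a b - d2 K a c + κ) / 10) :
    0 < δstar ∧
    pSTE (K - δstar • canonG a b c) a b c = P ∧
    ∀ δ : ℝ, 0 ≤ δ → P ≤ pSTE (K - δ • canonG a b c) a b c → δstar ≤ δ := by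
  have hκP : sigmoid κ = P := hκ ▸ sigmoid_log_sub_log_one_sub (by linarith) hP1
  have hstep := pSTE_sub_smul_canonG hab hac hbc K
  have hmargin : d2 K a c - d2 K a b < κ := by
    rwa [pSTE_eq_sigmoid, ← hκP, sigmoid_lt_iff] at hviol
  refine ⟨by rw [hδstar]; linarith, ?_, fun δ _ hδ => ?_⟩
  · rw [hstep, ← hκP, hδstar]
    ring_nf
  · rw [hstep, ← hκP, sigmoid_le_iff] at hδ
    rw [hδstar]
    linarith

/-- STE passive-aggressive step size: if `p_t^K < P` with `P ∈ (1/2, 1)` and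
`κ = log P - log(1-P)`, then `δ* = (d²_K(a,b) - d²_K(a,c) + κ)/10` is positive,
achieves `p_t^{K - δ*G} = P`, and is the smallest nonnegative step size `δ` with
`p_t^{K - δG} ≥ P` (hence the unique minimizer of `δ²` over the feasible set). -/
theorem ste_passive_aggressive_step {n : ℕ} (hn : 3 ≤ n) (a b c : Fin n)
    (hab : a ≠ b) (hac : a ≠ c) (hbc : b ≠ c)
    (K : Matrix (Fin n) (Fin n) ℝ)
    (P : ℝ) (hP0 : 1 / 2 < P) (hP1 : P < 1)
    (κ : ℝ) (hκ : κ = Real.log P - Real.log (1 - P))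
    (hviol : pSTE K a b c < P)
    (δstar : ℝ) (hδstar : δstar = (d2 K a b - d2 K a c + κ) / 10) :
    0 < δstar ∧
    pSTE (K - δstar • canonG a b c) a b c = P ∧
    ∀ δ : ℝ, 0 ≤ δ → P ≤ pSTE (K - δ • canonG a b c) a b c → δstar ≤ δ :=
  ste_passive_aggressive_step_general a b c hab hac hbc K P hP0 hP1 κ hκ hviol δstar hδstar
end
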